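/- Let $V \in C^r(\mathbb{T}^2, \mathbb{R})$ with $r \geq 4$, let $V_k(x_2) = \frac{1}{2\pi}\int_0^{2\pi} V(x_1, x_2) e^{-ikx_1} dx_1$ for $k \in \mathbb{Z}$, and let $[V](x_2) = V_0(x_2)$. Let $\gamma : [0, 2\pi] \to \mathbb{R}$ be a $C^1$ curve with $\gamma(0) = \gamma(2\pi)$ and $\max_\tau |\dot\gamma(\tau)| \leq B_0$. Then for every positive integer $\Omega$, $\left| \Omega \int_0^{2\pi} \big(V(-\Omega\tau, \gamma(\tau)) - [V](\gamma(\tau))\big) d\tau \right| \leq C \|V\|_{C^r} B_0 \sum_{k \neq 0} |k|^{-r}$, for an absolute constant $C$. -/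

import Mathlib

open Real intervalIntegral

/-- uniform bound on the oscillating part of the averaged action:
`|Ω ∫₀^{2π} (V(-Ωτ, γ(τ)) - [V](γ(τ))) dτ| ≤ C ‖V‖_{C^r} B₀ Σ_{k≠0} |k|^{-r}`
for an absolute constant `C`, uniformly in the integer `Ω ≥ 1`. -/
theorem stmt15 :
    ∃ C : ℝ, 0 < C ∧
      ∀ (r : ℕ), 4 ≤ r →
      ∀ V : ℝ × ℝ → ℝ,
        (∀ x y, V (x + 2 * π, y) = V (x, y) ∧ V (x, y + 2 * π) = V (x, y)) →
        ContDiff ℝ r V →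
      ∀ M : ℝ, (∀ k ≤ r, ∀ p, ‖iteratedFDeriv ℝ k V p‖ ≤ M) →
      ∀ (γ : ℝ → ℝ) (B0 : ℝ),
        ContDiff ℝ 1 γ → γ 0 = γ (2 * π) → (∀ τ, |deriv γ τ| ≤ B0) →
      ∀ Ω : ℕ, 1 ≤ Ω →
        |(Ω : ℝ) * ∫ τ in (0 : ℝ)..(2 * π),
            (V (-(Ω : ℝ) * τ, γ τ)
              - (1 / (2 * π)) * ∫ x1 in (0 : ℝ)..(2 * π), V (x1, γ τ))|
          ≤ C * M * B0 * ∑' k : ℤ, if k = 0 then (0 : ℝ) else (|(k : ℝ)| ^ r)⁻¹ := by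
  have hπ : (0:ℝ) < π := Real.pi_pos
  refine ⟨4 * π ^ 2, by positivity, ?_⟩
  intro r hr V hVper hV M hM γ B0 hγ hγper hγ' Ω hΩ
  have hM0 : 0 ≤ M := (norm_nonneg _).trans (hM 0 (by omega) (0,0))
  have hB0 : 0 ≤ B0 := (abs_nonneg _).trans (hγ' 0)
  have hΩ0 : (0:ℝ) < (Ω:ℝ) := by exact_mod_cast hΩ
  have hΩne : (Ω:ℝ) ≠ 0 := ne_of_gt hΩ0
  -- the sum is at least 2
  have hS : (2:ℝ) ≤ ∑' k : ℤ, if k = 0 then (0 : ℝ) else (|(k : ℝ)| ^ r)⁻¹ := by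
    set f : ℤ → ℝ := fun k => if k = 0 then (0:ℝ) else (|(k:ℝ)| ^ r)⁻¹ with hf
    have hnn : ∀ k, 0 ≤ f k := by
      intro k; simp only [hf]; split <;> positivity
    have hsum : Summable f := by
      have h1 : Summable fun n : ℤ => |1 / (n : ℝ) ^ r| :=
        ((summable_one_div_int_pow).mpr (by omega)).abs
      refine h1.of_nonneg_of_le hnn ?_
      intro k
      by_cases hk : k = 0
      · simp [hf, hk, zero_pow (by omega : r ≠ 0)]
      · simp only [hf, if_neg hk, one_div]
        rw [abs_inv, abs_pow]
    have := Summable.sum_le_tsum ({1, -1} : Finset ℤ) (fun k _ => hnn k) hsum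
    rw [Finset.sum_pair (by decide : (1:ℤ) ≠ -1)] at this
    rw [show (2:ℝ) = 1 + 1 by norm_num]
    simpa [hf] using this
  -- continuity
  have hVc : Continuous V := hV.continuous
  have hγc : Continuous γ := hγ.continuous
  -- Lipschitz bound for V
  have hVlip : ∀ (x y₁ y₂ : ℝ), |V (x, y₁) - V (x, y₂)| ≤ M * |y₁ - y₂| := by
    intro x y₁ y₂
    have hdiff : ∀ p ∈ (Set.univ : Set (ℝ × ℝ)), DifferentiableAt ℝ V p := by
      intro p _
      exact (hV.differentiable (by exact_mod_cast (by omega : r ≠ 0))).differentiableAt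
    have hbd : ∀ p ∈ (Set.univ : Set (ℝ × ℝ)), ‖fderiv ℝ V p‖ ≤ M := by
      intro p _
      have h1 : ‖iteratedFDeriv ℝ 0 (fderiv ℝ V) p‖ = ‖iteratedFDeriv ℝ 1 V p‖ :=
        norm_iteratedFDeriv_fderiv
      rw [norm_iteratedFDeriv_zero] at h1
      rw [h1]; exact hM 1 (by omega) p
    have := convex_univ.norm_image_sub_le_of_norm_fderiv_le hdiff hbd
      (Set.mem_univ (x, y₂)) (Set.mem_univ (x, y₁))
    have hnorm : ‖((x, y₁) : ℝ × ℝ) - (x, y₂)‖ = |y₁ - y₂| := by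
      simp [Prod.norm_def, Prod.sub_def, Real.norm_eq_abs, abs_nonneg]
    rw [hnorm] at this
    simpa [Real.norm_eq_abs] using this
  -- Lipschitz bound for γ
  have hγlip : ∀ a b : ℝ, |γ a - γ b| ≤ B0 * |a - b| := by
    intro a b
    have := convex_univ.norm_image_sub_le_of_norm_deriv_le
      (f := γ) (C := B0)
      (fun x _ => (hγ.differentiable one_ne_zero).differentiableAt)
      (fun x _ => by simpa [Real.norm_eq_abs] using hγ' x)
      (Set.mem_univ b) (Set.mem_univ a)
    simpa [Real.norm_eq_abs] using this
  -- the averaged potential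
  set A : ℝ → ℝ := fun y => (1 / (2 * π)) * ∫ x1 in (0:ℝ)..(2 * π), V (x1, y) with hA
  have hAlip : ∀ y₁ y₂ : ℝ, |A y₁ - A y₂| ≤ M * |y₁ - y₂| := by
    intro y₁ y₂
    have hint1 : IntervalIntegrable (fun x1 => V (x1, y₁)) MeasureTheory.volume 0 (2*π) :=
      (hVc.comp (continuous_id.prodMk continuous_const)).intervalIntegrable _ _
    have hint2 : IntervalIntegrable (fun x1 => V (x1, y₂)) MeasureTheory.volume 0 (2*π) :=
      (hVc.comp (continuous_id.prodMk continuous_const)).intervalIntegrable _ _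
    have hsub : A y₁ - A y₂
        = (1/(2*π)) * ∫ x1 in (0:ℝ)..(2*π), (V (x1, y₁) - V (x1, y₂)) := by
      rw [hA]; rw [intervalIntegral.integral_sub hint1 hint2]; ring
    rw [hsub, abs_mul]
    have hb := intervalIntegral.norm_integral_le_of_norm_le_const
      (C := M * |y₁ - y₂|) (a := (0:ℝ)) (b := 2*π)
      (f := fun x1 => V (x1, y₁) - V (x1, y₂))
      (fun x _ => by simpa [Real.norm_eq_abs] using hVlip x y₁ y₂)
    rw [Real.norm_eq_abs] at hb
    have h2π : |2*π - 0| = 2*π := by rw [sub_zero, abs_of_pos (by positivity)]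
    rw [h2π] at hb
    have h1 : |1/(2*π)| = 1/(2*π) := abs_of_pos (by positivity)
    rw [h1]
    calc (1/(2*π)) * |∫ x1 in (0:ℝ)..(2*π), (V (x1, y₁) - V (x1, y₂))|
        ≤ (1/(2*π)) * (M * |y₁ - y₂| * (2*π)) := by
          apply mul_le_mul_of_nonneg_left hb (by positivity)
      _ = M * |y₁ - y₂| := by field_simp
  -- the oscillating integrand
  set g : ℝ → ℝ := fun τ => V (-(Ω:ℝ) * τ, γ τ) - A (γ τ) with hg
  have hAc : Continuous A := by
    have hL : LipschitzWith (Real.toNNReal M) A := by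
      apply LipschitzWith.of_dist_le_mul
      intro y₁ y₂
      rw [Real.dist_eq, Real.dist_eq]
      calc |A y₁ - A y₂| ≤ M * |y₁ - y₂| := hAlip _ _
        _ ≤ (Real.toNNReal M) * |y₁ - y₂| := by
            gcongr
            exact Real.le_coe_toNNReal M
    exact hL.continuous
  have hgc : Continuous g := by
    apply Continuous.sub
    · exact hVc.comp ((continuous_const.mul continuous_id).prodMk hγc)
    · exact hAc.comp hγc
  -- partition points
  set t : ℕ → ℝ := fun j => 2 * π * j / Ω with ht
  have ht0 : t 0 = 0 := by simp [ht]
  have htΩ : t Ω = 2 * π := by simp only [ht]; field_simp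
  have htstep : ∀ j : ℕ, t (j+1) - t j = 2 * π / Ω := by
    intro j; rw [ht]; push_cast; field_simp; ring
  have htlt : ∀ j : ℕ, t j < t (j+1) := by
    intro j
    have := htstep j
    have h : 0 < 2 * π / (Ω:ℝ) := by positivity
    linarith
  -- integrability of g on each piece
  have hgint : ∀ (a b : ℝ), IntervalIntegrable g MeasureTheory.volume a b :=
    fun a b => hgc.intervalIntegrable a b
  -- split into pieces
  have hsplit : ∫ τ in (0:ℝ)..(2*π), g τ
      = ∑ j ∈ Finset.range Ω, ∫ τ in t j..t (j+1), g τ := by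
    rw [intervalIntegral.sum_integral_adjacent_intervals (fun k _ => hgint _ _), ht0, htΩ]
  -- the frozen integral vanishes
  have hfrozen : ∀ j : ℕ, (∫ τ in t j..t (j+1), (V (-(Ω:ℝ) * τ, γ (t j)) - A (γ (t j)))) = 0 := by
    intro j
    set c := γ (t j) with hc
    set fc : ℝ → ℝ := fun u => V (u, c) with hfc
    have hfcc : Continuous fc := hVc.comp (continuous_id.prodMk continuous_const)
    have hper : Function.Periodic fc (2*π) := fun x => (hVper x c).1
    have hint1 : IntervalIntegrable (fun τ => fc (-(Ω:ℝ) * τ)) MeasureTheory.volume (t j) (t (j+1)) :=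
      (hfcc.comp (continuous_const.mul continuous_id)).intervalIntegrable _ _
    have hint2 : IntervalIntegrable (fun _ : ℝ => A c) MeasureTheory.volume (t j) (t (j+1)) :=
      intervalIntegrable_const
    rw [intervalIntegral.integral_sub hint1 hint2]
    have hcomp : (∫ τ in t j..t (j+1), fc (-(Ω:ℝ) * τ))
        = (-(Ω:ℝ))⁻¹ • ∫ u in (-(Ω:ℝ) * t j)..(-(Ω:ℝ) * t (j+1)), fc u := by
      exact intervalIntegral.integral_comp_mul_left fc (by simpa using hΩne)
    have hval : (∫ u in (-(Ω:ℝ) * t j)..(-(Ω:ℝ) * t (j+1)), fc u)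
        = - ∫ u in (0:ℝ)..(2*π), fc u := by
      rw [intervalIntegral.integral_symm]
      congr 1
      have he1 : -(Ω:ℝ) * t (j+1) = -(2*π*(j+1)) := by rw [ht]; push_cast; field_simp
      have he2 : -(Ω:ℝ) * t j = -(2*π*(j+1)) + 2*π := by rw [ht]; push_cast; field_simp; ring
      rw [he1, he2]
      have := hper.intervalIntegral_add_eq (-(2*π*(j+1))) 0
      simpa using this
    have hAc2 : (∫ _ in t j..t (j+1), A c) = (2*π/Ω) * A c := by
      rw [intervalIntegral.integral_const, smul_eq_mul, htstep j]
    rw [hcomp, hval, hAc2, smul_eq_mul, hA]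
    field_simp
    ring
  -- bound each piece
  have hpiece : ∀ j : ℕ, |∫ τ in t j..t (j+1), g τ|
      ≤ (2 * M * B0 * (2*π/Ω)) * (2*π/Ω) := by
    intro j
    have hzero := hfrozen j
    have hint1 : IntervalIntegrable g MeasureTheory.volume (t j) (t (j+1)) := hgint _ _
    have hint2 : IntervalIntegrable
        (fun τ => V (-(Ω:ℝ) * τ, γ (t j)) - A (γ (t j))) MeasureTheory.volume (t j) (t (j+1)) :=
      ((hVc.comp ((continuous_const.mul continuous_id).prodMk continuous_const)).sub
        continuous_const).intervalIntegrable _ _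
    have heq : (∫ τ in t j..t (j+1), g τ)
        = ∫ τ in t j..t (j+1),
            (g τ - (V (-(Ω:ℝ) * τ, γ (t j)) - A (γ (t j)))) := by
      rw [intervalIntegral.integral_sub hint1 hint2, hzero, sub_zero]
    rw [heq]
    have hb := intervalIntegral.norm_integral_le_of_norm_le_const
      (C := 2 * M * B0 * (2*π/Ω)) (a := t j) (b := t (j+1))
      (f := fun τ => g τ - (V (-(Ω:ℝ) * τ, γ (t j)) - A (γ (t j)))) ?_
    · rw [Real.norm_eq_abs] at hb
      have habs : |t (j+1) - t j| = 2*π/Ω := by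
        rw [htstep j]; exact abs_of_pos (by positivity)
      rwa [habs] at hb
    · intro τ hτ
      rw [Set.uIoc_of_le (htlt j).le] at hτ
      have hτ1 : t j < τ := hτ.1
      have hτ2 : τ ≤ t (j+1) := hτ.2
      have hdist : |γ τ - γ (t j)| ≤ B0 * (2*π/Ω) := by
        calc |γ τ - γ (t j)| ≤ B0 * |τ - t j| := hγlip _ _
          _ ≤ B0 * (2*π/Ω) := by
              apply mul_le_mul_of_nonneg_left _ hB0
              rw [abs_of_pos (by linarith)]
              have := htstep j; linarith
      rw [Real.norm_eq_abs, hg]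
      have key : |(V (-(Ω:ℝ) * τ, γ τ) - A (γ τ)) - (V (-(Ω:ℝ) * τ, γ (t j)) - A (γ (t j)))|
          ≤ M * |γ τ - γ (t j)| + M * |γ τ - γ (t j)| := by
        have h1 := hVlip (-(Ω:ℝ) * τ) (γ τ) (γ (t j))
        have h2 := hAlip (γ τ) (γ (t j))
        calc |(V (-(Ω:ℝ) * τ, γ τ) - A (γ τ)) - (V (-(Ω:ℝ) * τ, γ (t j)) - A (γ (t j)))|
            = |(V (-(Ω:ℝ) * τ, γ τ) - V (-(Ω:ℝ) * τ, γ (t j))) - (A (γ τ) - A (γ (t j)))| := by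
              ring_nf
          _ ≤ |V (-(Ω:ℝ) * τ, γ τ) - V (-(Ω:ℝ) * τ, γ (t j))| + |A (γ τ) - A (γ (t j))| :=
              abs_sub _ _
          _ ≤ M * |γ τ - γ (t j)| + M * |γ τ - γ (t j)| := add_le_add h1 h2
      calc |(V (-(Ω:ℝ) * τ, γ τ) - A (γ τ)) - (V (-(Ω:ℝ) * τ, γ (t j)) - A (γ (t j)))|
          ≤ M * |γ τ - γ (t j)| + M * |γ τ - γ (t j)| := key
        _ ≤ M * (B0 * (2*π/Ω)) + M * (B0 * (2*π/Ω)) := by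
            gcongr
        _ = 2 * M * B0 * (2*π/Ω) := by ring
  -- assemble
  have htotal : |∫ τ in (0:ℝ)..(2*π), g τ| ≤ (Ω:ℝ) * ((2 * M * B0 * (2*π/Ω)) * (2*π/Ω)) := by
    rw [hsplit]
    calc |∑ j ∈ Finset.range Ω, ∫ τ in t j..t (j+1), g τ|
        ≤ ∑ j ∈ Finset.range Ω, |∫ τ in t j..t (j+1), g τ| :=
          Finset.abs_sum_le_sum_abs _ _
      _ ≤ ∑ j ∈ Finset.range Ω, (2 * M * B0 * (2*π/Ω)) * (2*π/Ω) :=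
          Finset.sum_le_sum (fun j _ => hpiece j)
      _ = (Ω:ℝ) * ((2 * M * B0 * (2*π/Ω)) * (2*π/Ω)) := by
          rw [Finset.sum_const, Finset.card_range, nsmul_eq_mul]
  have hfinal : |(Ω:ℝ) * ∫ τ in (0:ℝ)..(2*π), g τ| ≤ 8 * π^2 * M * B0 := by
    rw [abs_mul, abs_of_pos hΩ0]
    calc (Ω:ℝ) * |∫ τ in (0:ℝ)..(2*π), g τ|
        ≤ (Ω:ℝ) * ((Ω:ℝ) * ((2 * M * B0 * (2*π/Ω)) * (2*π/Ω))) :=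
          mul_le_mul_of_nonneg_left htotal hΩ0.le
      _ = 8 * π^2 * M * B0 := by field_simp; ring
  calc |(Ω : ℝ) * ∫ τ in (0 : ℝ)..(2 * π),
          (V (-(Ω : ℝ) * τ, γ τ) - (1 / (2 * π)) * ∫ x1 in (0 : ℝ)..(2 * π), V (x1, γ τ))|
      = |(Ω:ℝ) * ∫ τ in (0:ℝ)..(2*π), g τ| := by rw [hg, hA]
    _ ≤ 8 * π^2 * M * B0 := hfinal
    _ = (4 * π^2) * M * B0 * 2 := by ring
    _ ≤ (4 * π^2) * M * B0 * ∑' k : ℤ, if k = 0 then (0 : ℝ) else (|(k : ℝ)| ^ r)⁻¹ := by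
        apply mul_le_mul_of_nonneg_left hS (by positivity)
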